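/- Let s ≥ 0 and M ≥ 700. Then for all real x with |x| ≤ 1 and all τ with s = |τ|^(2/5), there is a constant c > 0 independent of τ and x such that s³·(1 − 3s²x²)/(1+s²x²)³ + M(τ² + 1)x² ≥ c·s³. -/
import Mathlib


theorem morawetz_symbol_lower_bound (M : ℝ) (hM : 700 ≤ M) :
    ∃ c : ℝ, 0 < c ∧ ∀ τ x s : ℝ, s = |τ| ^ ((2 : ℝ) / 5) → |x| ≤ 1 →
      c * s ^ 3 ≤
        s ^ 3 * (1 - 3 * s ^ 2 * x ^ 2) / (1 + s ^ 2 * x ^ 2) ^ 3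
          + M * (τ ^ 2 + 1) * x ^ 2 := by
  refine ⟨1, one_pos, fun τ x s hs hx => ?_⟩
  have hs0 : 0 ≤ s := hs ▸ Real.rpow_nonneg (abs_nonneg τ) _
  have hτ : τ ^ 2 = s ^ 5 := by
    rw [hs, ← Real.rpow_natCast (|τ| ^ ((2 : ℝ) / 5)) 5,
      ← Real.rpow_mul (abs_nonneg τ),
      show ((2 : ℝ)/5 * (5 : ℕ)) = ((2 : ℕ) : ℝ) by norm_num,
      Real.rpow_natCast, sq_abs]
  have hu0 : 0 ≤ s ^ 2 * x ^ 2 := by positivity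
  have h1u : (0 : ℝ) < (1 + s ^ 2 * x ^ 2) ^ 3 := by positivity
  have hkey : s ^ 3 * (1 - 6 * (s ^ 2 * x ^ 2)) ≤
      s ^ 3 * (1 - 3 * s ^ 2 * x ^ 2) / (1 + s ^ 2 * x ^ 2) ^ 3 := by
    rw [le_div_iff₀ h1u]
    have h2 : (1 - 6 * (s ^ 2 * x ^ 2)) * (1 + s ^ 2 * x ^ 2) ^ 3 ≤ 1 - 3 * s ^ 2 * x ^ 2 := by
      nlinarith [sq_nonneg (s ^ 2 * x ^ 2), pow_nonneg hu0 3, sq_nonneg (s ^ 2 * x ^ 2 * (s ^ 2 * x ^ 2))]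
    calc s ^ 3 * (1 - 6 * (s ^ 2 * x ^ 2)) * (1 + s ^ 2 * x ^ 2) ^ 3
        = s ^ 3 * ((1 - 6 * (s ^ 2 * x ^ 2)) * (1 + s ^ 2 * x ^ 2) ^ 3) := by ring
      _ ≤ s ^ 3 * (1 - 3 * s ^ 2 * x ^ 2) :=
          mul_le_mul_of_nonneg_left h2 (pow_nonneg hs0 3)
  have h5 : 0 ≤ s ^ 5 * x ^ 2 := by positivity
  have hx2 : 0 ≤ x ^ 2 := sq_nonneg x
  rw [hτ]
  nlinarith [hkey, mul_nonneg h5 (sub_nonneg.mpr hM), mul_nonneg hx2 (sub_nonneg.mpr hM)]
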